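/- Let T be a p×p real matrix every eigenvalue of which, viewed over ℂ, has strictly negative real part; let e be the all-ones vector in ℝ^p, t := −T e, and π ∈ ℝ^p. Then for every u ≥ 0 and every n ∈ ℕ, ∫₀^∞ zⁿ e^{−uz} · (π·(exp(zT) t)) dz = n! · π·(((u·I − T)⁻¹)^{n+1} t). (In particular, the shared phase-type frailty likelihood with κ uncensored observations equals κ! π (sI − T)^{−(κ+1)} t with s the sum of the cumulative hazards, and the expectations needed in the E-step are ratios of such quantities.) -/

import Mathlib

/-!
Put `A = T - u • 1`, so that `e^{-uz} exp(zT) = exp(zA)` and the eigenvalues of `A` still lie in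
the open left half-plane. On a generalized eigenspace of `A` for `μ`, `exp(zA)` acts as `e^{zμ}`
times a polynomial in `z`; since these eigenspaces span `ℂ^p`, every `exp(zA) x` decays like
`e^{cz}` for some `c < 0`. Hence all boundary terms vanish when integrating by parts,
`∫ zᵐ⁺¹ π exp(zA) (-A) y = (m + 1) ∫ zᵐ π exp(zA) y`, and induction on `m` gives
`∫ zᵐ π exp(zA) x = m! π ((-A)⁻¹)ᵐ⁺¹ x`.
-/

open Matrix MeasureTheory NormedSpace Filter Asymptotics Topology Finset

namespace Matrix

variable {ι : Type*} [Fintype ι] [DecidableEq ι]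

theorem exp_add_smul_one {𝕂 : Type*} [RCLike 𝕂] (A : Matrix ι ι 𝕂) (c : 𝕂) :
    exp (A + c • 1) = exp c • exp A := by
  rw [exp_add_of_commute _ _ ((Commute.one_right _).smul_right _), smul_one_eq_diagonal,
    exp_diagonal, Pi.exp_def, ← smul_one_eq_diagonal, mul_smul_one]

theorem hasSum_exp_mulVec {𝕂 : Type*} [RCLike 𝕂] (N : Matrix ι ι 𝕂) (v : ι → 𝕂) :
    HasSum (fun j => (j.factorial : 𝕂)⁻¹ • (N ^ j *ᵥ v)) (exp N *ᵥ v) := by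
  -- Matrices carry no canonical norm; any Banach-algebra norm gives access to the series API.
  open scoped Norms.Operator in
  have h := (exp_series_hasSum_exp' (𝕂 := 𝕂) N).map ((mulVecBilin 𝕂 𝕂).flip v)
      (continuous_id.matrix_mulVec continuous_const)
  simp only [Function.comp_def, LinearMap.flip_apply, mulVecBilin_apply, smul_mulVec] at h
  exact h

theorem exp_mulVec_eq_sum_of_pow_mulVec_eq_zero {𝕂 : Type*} [RCLike 𝕂] {N : Matrix ι ι 𝕂}
    {v : ι → 𝕂} {k : ℕ} (hv : N ^ k *ᵥ v = 0) :
    exp N *ᵥ v = ∑ j ∈ range k, (j.factorial : 𝕂)⁻¹ • (N ^ j *ᵥ v) := by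
  refine (hasSum_exp_mulVec N v).unique (hasSum_sum_of_ne_finset_zero fun j hj => ?_)
  rw [← Nat.sub_add_cancel (not_lt.mp (mem_range.not.mp hj)), pow_add, ← mulVec_mulVec, hv,
    mulVec_zero, smul_zero]

theorem exp_smul_mulVec_eq_sum {𝕂 : Type*} [RCLike 𝕂] {M : Matrix ι ι 𝕂} {μ : 𝕂} {k : ℕ}
    {v : ι → 𝕂} (hv : (M - μ • 1) ^ k *ᵥ v = 0) (z : 𝕂) :
    exp (z • M) *ᵥ v =
      exp (z * μ) • ∑ j ∈ range k, ((j.factorial : 𝕂)⁻¹ * z ^ j) • ((M - μ • 1) ^ j *ᵥ v) := by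
  have hsplit : z • M = z • (M - μ • 1) + (z * μ) • 1 := by
    rw [smul_sub, smul_smul, sub_add_cancel]
  have hzv : (z • (M - μ • 1)) ^ k *ᵥ v = 0 := by rw [smul_pow, smul_mulVec, hv, smul_zero]
  rw [hsplit, exp_add_smul_one, smul_mulVec, exp_mulVec_eq_sum_of_pow_mulVec_eq_zero hzv]
  simp only [smul_pow, smul_mulVec, smul_smul]

theorem isBigO_exp_smul_mulVec_of_pow_mulVec_eq_zero {M : Matrix ι ι ℂ} {μ : ℂ} {k : ℕ}
    {v : ι → ℂ} (hv : (M - μ • 1) ^ k *ᵥ v = 0) {c : ℝ} (hc : μ.re < c) :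
    (fun z : ℝ => exp ((z : ℂ) • M) *ᵥ v) =O[atTop] fun z => Real.exp (c * z) := by
  have hpoly : (fun z : ℝ => ∑ j ∈ range k,
      ((j.factorial : ℂ)⁻¹ * (z : ℂ) ^ j) • ((M - μ • 1) ^ j *ᵥ v))
        =O[atTop] fun z => Real.exp ((c - μ.re) * z) := by
    refine IsBigO.fun_sum fun j _ => IsBigO.trans (g := fun z : ℝ => z ^ j) ?_
      (isLittleO_pow_exp_pos_mul_atTop j (sub_pos.2 hc)).isBigO
    refine isBigO_of_le' (c := (j.factorial : ℝ)⁻¹ * ‖(M - μ • 1) ^ j *ᵥ v‖) _ fun z => ?_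
    simp only [norm_smul, norm_mul, norm_inv, norm_pow, Complex.norm_natCast, Complex.norm_real,
      Real.norm_eq_abs]
    exact (mul_right_comm _ _ _).le
  have hexp : (fun z : ℝ => Complex.exp (z * μ)) =O[atTop] fun z => Real.exp (μ.re * z) :=
    isBigO_of_le' (c := 1) _ fun z => by simp [Complex.norm_exp, mul_comm]
  simp_rw [exp_smul_mulVec_eq_sum hv, ← Complex.exp_eq_exp_ℂ]
  refine (hexp.smul hpoly).congr_right fun z => ?_
  rw [smul_eq_mul, ← Real.exp_add]
  ring_nf

theorem isBigO_exp_ofReal_smul_mulVec {M : Matrix ι ι ℂ} {c : ℝ} (hM : ∀ μ ∈ spectrum ℂ M, μ.re < c)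
    (v : ι → ℂ) : (fun z : ℝ => exp ((z : ℂ) • M) *ᵥ v) =O[atTop] fun z => Real.exp (c * z) := by
  have hv : v ∈ ⨆ μ, Module.End.maxGenEigenspace (toLinAlgEquiv' M) μ := by
    rw [Module.End.iSup_maxGenEigenspace_eq_top]; trivial
  refine Submodule.iSup_induction _ (motive := fun v =>
    (fun z : ℝ => exp ((z : ℂ) • M) *ᵥ v) =O[atTop] fun z => Real.exp (c * z))
    hv (fun μ w hw => ?_) ?_ fun x y hx hy => ?_
  · obtain ⟨k, hk⟩ := (Module.End.mem_maxGenEigenspace _ _ _).1 hw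
    rw [← map_one toLinAlgEquiv', ← map_smul, ← map_sub, ← map_pow, toLinAlgEquiv'_apply] at hk
    by_cases hμ : μ ∈ spectrum ℂ M
    · exact isBigO_exp_smul_mulVec_of_pow_mulVec_eq_zero hk (hM μ hμ)
    · have hunit : IsUnit ((M - μ • 1) ^ k) := by
        have := (spectrum.notMem_iff.1 hμ).neg
        rw [neg_sub, Algebra.algebraMap_eq_smul_one] at this
        exact this.pow k
      obtain rfl : w = 0 := mulVec_injective_iff_isUnit.2 hunit (hk.trans (mulVec_zero _).symm)
      simp only [mulVec_zero]
      exact isBigO_zero _ _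
  · simpa only [mulVec_zero] using isBigO_zero _ _
  · simpa only [mulVec_add] using hx.add hy

theorem exp_map {𝕂 𝕂' : Type*} [RCLike 𝕂] [RCLike 𝕂'] {f : 𝕂 →+* 𝕂'} (hf : Continuous f)
    (A : Matrix ι ι 𝕂) : exp (A.map f) = (exp A).map f := by
  open scoped Norms.Operator in
  have h := NormedSpace.map_exp f.mapMatrix (continuous_id.matrix_map hf) A
  exact h.symm

theorem isBigO_exp_smul_mulVec {A : Matrix ι ι ℝ} {c : ℝ}
    (hA : ∀ μ ∈ spectrum ℂ (A.map (algebraMap ℝ ℂ)), μ.re < c) (x : ι → ℝ) :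
    (fun z : ℝ => exp (z • A) *ᵥ x) =O[atTop] fun z => Real.exp (c * z) := by
  have hre (z : ℝ) : exp (z • A) *ᵥ x = fun i =>
      ((exp ((z : ℂ) • A.map (algebraMap ℝ ℂ)) *ᵥ fun j => (x j : ℂ)) i).re := by
    ext i
    have h := congrArg Complex.re (RingHom.map_mulVec (algebraMap ℝ ℂ) (exp (z • A)) x i)
    rwa [← exp_map Complex.continuous_ofReal,
      Matrix.map_smul' _ _ _ fun _ _ => map_mul _ _ _] at h
  let re : (ι → ℂ) →L[ℝ] ι → ℝ := .pi fun i => Complex.reCLM.comp (.proj i)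
  simp_rw [hre]
  exact (re.isBigO_comp _ _).trans (isBigO_exp_ofReal_smul_mulVec hA _)

theorem hasDerivAt_exp_smul_mulVec (A : Matrix ι ι ℝ) (x : ι → ℝ) (z : ℝ) :
    HasDerivAt (fun z : ℝ => exp (z • A) *ᵥ x) (exp (z • A) *ᵥ (A *ᵥ x)) z := by
  open scoped Norms.Operator in
  have h := ((mulVecBilin ℝ ℝ).flip x).toContinuousLinearMap.hasFDerivAt.comp_hasDerivAt z
    (hasDerivAt_exp_smul_const (𝕂 := ℝ) A z)
  rw [mulVec_mulVec]
  exact h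

theorem hasDerivAt_dotProduct_exp_smul_mulVec (A : Matrix ι ι ℝ) (w x : ι → ℝ) (z : ℝ) :
    HasDerivAt (fun z : ℝ => w ⬝ᵥ (exp (z • A) *ᵥ x)) (w ⬝ᵥ (exp (z • A) *ᵥ (A *ᵥ x))) z :=
  (dotProductBilin ℝ ℝ w).toContinuousLinearMap.hasFDerivAt.comp_hasDerivAt z
    (hasDerivAt_exp_smul_mulVec A x z)

theorem continuous_dotProduct_exp_smul_mulVec (A : Matrix ι ι ℝ) (w x : ι → ℝ) :
    Continuous fun z : ℝ => w ⬝ᵥ (exp (z • A) *ᵥ x) :=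
  continuous_iff_continuousAt.2 fun z =>
    (hasDerivAt_dotProduct_exp_smul_mulVec A w x z).continuousAt

theorem hasDerivAt_neg_dotProduct_exp_smul_mulVec (A : Matrix ι ι ℝ) (w y : ι → ℝ) (z : ℝ) :
    HasDerivAt (fun z : ℝ => -(w ⬝ᵥ (exp (z • A) *ᵥ y))) (w ⬝ᵥ (exp (z • A) *ᵥ (-A *ᵥ y))) z := by
  simpa only [neg_mulVec, mulVec_neg, dotProduct_neg] using
    (hasDerivAt_dotProduct_exp_smul_mulVec A w y z).fun_neg

theorem isUnit_of_zero_notMem_spectrum_map_ofReal {A : Matrix ι ι ℝ}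
    (h : 0 ∉ spectrum ℂ (A.map (algebraMap ℝ ℂ))) : IsUnit A := by
  have hC := isUnit_iff_isUnit_det _ |>.1 <| (spectrum.zero_notMem_iff ℂ).1 h
  rw [← RingHom.mapMatrix_apply, ← RingHom.map_det, isUnit_iff_ne_zero, map_ne_zero] at hC
  exact (isUnit_iff_isUnit_det A).2 hC.isUnit

def IsHurwitz (A : Matrix ι ι ℝ) : Prop :=
  ∀ μ ∈ spectrum ℂ (A.map (algebraMap ℝ ℂ)), μ.re < 0

theorem IsHurwitz.sub_smul_one {A : Matrix ι ι ℝ} (hA : A.IsHurwitz) {u : ℝ} (hu : 0 ≤ u) :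
    (A - u • 1).IsHurwitz := by
  intro μ hμ
  have hmap : (A - u • 1).map (algebraMap ℝ ℂ) =
      A.map (algebraMap ℝ ℂ) - algebraMap ℂ _ (u : ℂ) := by
    ext i j
    by_cases h : i = j <;> simp [h, Algebra.algebraMap_eq_smul_one]
  rw [hmap, ← spectrum.sub_singleton_eq] at hμ
  obtain ⟨ν, hν, _, rfl, rfl⟩ := hμ
  simpa using (hA ν hν).trans_le (by simpa using hu)

theorem IsHurwitz.isUnit {A : Matrix ι ι ℝ} (hA : A.IsHurwitz) : IsUnit A :=
  isUnit_of_zero_notMem_spectrum_map_ofReal fun h => (hA 0 h).false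

theorem IsHurwitz.exists_neg_isBigO_exp_smul_mulVec {A : Matrix ι ι ℝ} (hA : A.IsHurwitz) :
    ∃ c < 0, ∀ x : ι → ℝ,
      (fun z : ℝ => exp (z • A) *ᵥ x) =O[atTop] fun z => Real.exp (c * z) := by
  have h : ∀ᶠ c in 𝓝[<] (0 : ℝ), ∀ μ ∈ spectrum ℂ (A.map (algebraMap ℝ ℂ)), μ.re < c :=
    (finite_spectrum _).eventually_all.2 fun μ hμ =>
      nhdsWithin_le_nhds (eventually_gt_nhds (hA μ hμ))
  obtain ⟨c, hc, hc0⟩ := (h.and self_mem_nhdsWithin).exists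
  exact ⟨c, hc0, fun x => isBigO_exp_smul_mulVec hc x⟩

theorem IsHurwitz.exists_pos_isBigO_pow_mul_dotProduct {A : Matrix ι ι ℝ} (hA : A.IsHurwitz) :
    ∃ b > 0, ∀ (m : ℕ) (w x : ι → ℝ),
      (fun z : ℝ => z ^ m * (w ⬝ᵥ (exp (z • A) *ᵥ x))) =O[atTop] fun z => Real.exp (-b * z) := by
  obtain ⟨c, hc, hdecay⟩ := hA.exists_neg_isBigO_exp_smul_mulVec
  refine ⟨-c / 2, by linarith, fun m w x => ?_⟩
  have hpow := (isLittleO_pow_exp_pos_mul_atTop m (b := -c / 2) (by linarith)).isBigO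
  have hdot := ((dotProductBilin ℝ ℝ w).toContinuousLinearMap.isBigO_comp _ _).trans (hdecay x)
  refine (hpow.mul hdot).congr_right fun z => ?_
  rw [← Real.exp_add]
  ring_nf

theorem IsHurwitz.integrableOn_pow_mul_dotProduct {A : Matrix ι ι ℝ} (hA : A.IsHurwitz) (m : ℕ)
    (w x : ι → ℝ) :
    IntegrableOn (fun z : ℝ => z ^ m * (w ⬝ᵥ (exp (z • A) *ᵥ x))) (Set.Ioi 0) := by
  obtain ⟨b, hb, h⟩ := hA.exists_pos_isBigO_pow_mul_dotProduct
  exact integrable_of_isBigO_exp_neg hb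
    ((continuous_pow m).mul (continuous_dotProduct_exp_smul_mulVec A w x)).continuousOn (h m w x)

theorem IsHurwitz.tendsto_pow_mul_dotProduct {A : Matrix ι ι ℝ} (hA : A.IsHurwitz) (m : ℕ)
    (w x : ι → ℝ) :
    Tendsto (fun z : ℝ => z ^ m * (w ⬝ᵥ (exp (z • A) *ᵥ x))) atTop (𝓝 0) := by
  obtain ⟨b, hb, h⟩ := hA.exists_pos_isBigO_pow_mul_dotProduct
  refine (h m w x).trans_tendsto ?_
  simp only [neg_mul]
  exact Real.tendsto_exp_neg_atTop_nhds_zero.comp (tendsto_id.const_mul_atTop hb)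

theorem IsHurwitz.integral_Ioi_dotProduct_exp_smul_mulVec {A : Matrix ι ι ℝ} (hA : A.IsHurwitz)
    (w y : ι → ℝ) : ∫ z in Set.Ioi (0 : ℝ), w ⬝ᵥ (exp (z • A) *ᵥ (-A *ᵥ y)) = w ⬝ᵥ y := by
  have hint := hA.integrableOn_pow_mul_dotProduct 0 w (-A *ᵥ y)
  have htend := (hA.tendsto_pow_mul_dotProduct 0 w y).neg
  simp only [pow_zero, one_mul, neg_zero] at hint htend
  rw [integral_Ioi_of_hasDerivAt_of_tendsto' (fun z _ =>
    hasDerivAt_neg_dotProduct_exp_smul_mulVec A w y z) hint htend]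
  simp

theorem IsHurwitz.integral_Ioi_pow_succ_mul_dotProduct {A : Matrix ι ι ℝ} (hA : A.IsHurwitz)
    (m : ℕ) (w y : ι → ℝ) :
    ∫ z in Set.Ioi (0 : ℝ), z ^ (m + 1) * (w ⬝ᵥ (exp (z • A) *ᵥ (-A *ᵥ y))) =
      (m + 1) * ∫ z in Set.Ioi (0 : ℝ), z ^ m * (w ⬝ᵥ (exp (z • A) *ᵥ y)) := by
  have hu (z : ℝ) : HasDerivAt (fun z : ℝ => z ^ (m + 1)) ((m + 1) * z ^ m) z := by
    simpa using hasDerivAt_pow (m + 1) z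
  have hu'v : IntegrableOn (fun z : ℝ => (m + 1) * z ^ m * -(w ⬝ᵥ (exp (z • A) *ᵥ y)))
      (Set.Ioi 0) := by
    refine IntegrableOn.congr_fun
      ((hA.integrableOn_pow_mul_dotProduct m w y).const_mul ((m : ℝ) + 1)).neg
      (fun z _ => ?_) measurableSet_Ioi
    simp only [Pi.neg_apply]
    ring
  have hcont : Continuous fun z : ℝ => z ^ (m + 1) * -(w ⬝ᵥ (exp (z • A) *ᵥ y)) :=
    (continuous_pow _).mul (continuous_dotProduct_exp_smul_mulVec A w y).neg
  have hzero : Tendsto (fun z : ℝ => z ^ (m + 1) * -(w ⬝ᵥ (exp (z • A) *ᵥ y)))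
      (𝓝[>] 0) (𝓝 0) := by
    simpa using (hcont.tendsto 0).mono_left nhdsWithin_le_nhds
  have hinfty : Tendsto (fun z : ℝ => z ^ (m + 1) * -(w ⬝ᵥ (exp (z • A) *ᵥ y))) atTop (𝓝 0) := by
    simpa only [mul_neg, neg_zero] using (hA.tendsto_pow_mul_dotProduct (m + 1) w y).neg
  rw [integral_Ioi_mul_deriv_eq_deriv_mul (fun z _ => hu z)
    (fun z _ => hasDerivAt_neg_dotProduct_exp_smul_mulVec A w y z)
    (hA.integrableOn_pow_mul_dotProduct (m + 1) w (-A *ᵥ y)) hu'v hzero hinfty,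
    ← integral_const_mul]
  simp only [mul_neg, integral_neg, zero_sub, sub_neg_eq_add, neg_zero, zero_add, mul_assoc]

theorem IsHurwitz.integral_Ioi_pow_mul_dotProduct {A : Matrix ι ι ℝ} (hA : A.IsHurwitz) (m : ℕ)
    (w x : ι → ℝ) :
    ∫ z in Set.Ioi (0 : ℝ), z ^ m * (w ⬝ᵥ (exp (z • A) *ᵥ x)) =
      m.factorial * (w ⬝ᵥ ((-A)⁻¹ ^ (m + 1) *ᵥ x)) := by
  have hx (x : ι → ℝ) : -A *ᵥ ((-A)⁻¹ *ᵥ x) = x := by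
    rw [mulVec_mulVec, mul_nonsing_inv _ ((isUnit_iff_isUnit_det _).1 hA.isUnit.neg), one_mulVec]
  induction m generalizing x with
  | zero =>
    simp only [pow_zero, one_mul, zero_add, pow_one, Nat.factorial_zero, Nat.cast_one]
    conv_lhs => rw [← hx x]
    exact hA.integral_Ioi_dotProduct_exp_smul_mulVec w _
  | succ m ih =>
    rw [← hx x, hA.integral_Ioi_pow_succ_mul_dotProduct, ih, hx, pow_succ _ (m + 1),
      ← mulVec_mulVec, Nat.factorial_succ]
    push_cast
    ring

end Matrix

theorem phaseType_weighted_moment_general {p : ℕ} (T : Matrix (Fin p) (Fin p) ℝ)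
    (hT : ∀ μ ∈ spectrum ℂ (T.map (algebraMap ℝ ℂ)), μ.re < 0)
    (t : Fin p → ℝ) (π : Fin p → ℝ) :
    ∀ u : ℝ, 0 ≤ u → ∀ n : ℕ,
      ∫ z in Set.Ioi (0 : ℝ),
          z ^ n * Real.exp (-(u * z)) * (π ⬝ᵥ (NormedSpace.exp (z • T) *ᵥ t)) =
        (n.factorial : ℝ) *
          (π ⬝ᵥ (((u • (1 : Matrix (Fin p) (Fin p) ℝ) - T)⁻¹) ^ (n + 1) *ᵥ t)) := by
  intro u hu n
  have hshift (z : ℝ) : z ^ n * Real.exp (-(u * z)) * (π ⬝ᵥ (exp (z • T) *ᵥ t)) =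
      z ^ n * (π ⬝ᵥ (exp (z • (T - u • 1)) *ᵥ t)) := by
    rw [smul_sub, smul_smul, sub_eq_add_neg, ← neg_smul, mul_comm z u, exp_add_smul_one,
      ← Real.exp_eq_exp_ℝ, smul_mulVec, dotProduct_smul, smul_eq_mul]
    ring
  simp_rw [hshift]
  rw [IsHurwitz.integral_Ioi_pow_mul_dotProduct (IsHurwitz.sub_smul_one hT hu), neg_sub]

/-- For a phase-type density `f_Z(z) = π exp(Tz) t`, for every `u ≥ 0` and `n ∈ ℕ`,
`∫₀^∞ zⁿ e^{-uz} π exp(zT) t dz = n! π ((uI - T)⁻¹)^{n+1} t`. -/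
theorem phaseType_weighted_moment {p : ℕ} (T : Matrix (Fin p) (Fin p) ℝ)
    (hT : ∀ μ ∈ spectrum ℂ (T.map (algebraMap ℝ ℂ)), μ.re < 0)
    (e : Fin p → ℝ) (he : e = fun _ => 1) (t : Fin p → ℝ) (ht : t = (-T) *ᵥ e)
    (π : Fin p → ℝ) :
    ∀ u : ℝ, 0 ≤ u → ∀ n : ℕ,
      ∫ z in Set.Ioi (0 : ℝ),
          z ^ n * Real.exp (-(u * z)) * (π ⬝ᵥ (NormedSpace.exp (z • T) *ᵥ t)) =
        (n.factorial : ℝ) *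
          (π ⬝ᵥ (((u • (1 : Matrix (Fin p) (Fin p) ℝ) - T)⁻¹) ^ (n + 1) *ᵥ t)) :=
  phaseType_weighted_moment_general T hT t π
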